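/- arXiv:2004.11103 — 6 statements merged into one kernel-verified Lean document; each statement's English description precedes it below -/
import Mathlib

section
/- Let d ≥ 2, ω = exp(2πi/d), Z the generalized Pauli-Z on ℂ^d, |J⟩ the uniform superposition, and B₁ = ω^{1/2}(I − 2|J⟩⟨J|)Z (where ω^{1/2} = exp(πi/d)). Then B₁ is unitary and for every 1 ≤ k ≤ d one has B₁^k = ω^{k/2}(I − 2∑_{ℓ=0}^{k−1} Z^ℓ|J⟩⟨J|Z^{−ℓ}) Z^k; in particular B₁^d = I. -/
open Complex Matrix Finset

/-!
Write `B₁ = ω^{1/2} R Z` with the reflection `R = 1 - 2P`, `P = |J⟩⟨J|`. Moving `Z^k` past `R`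
conjugates `P` into `P_k = Z^k P Z^{-k}`, so `B₁^k = ω^{k/2} (1 - 2P_0) ⋯ (1 - 2P_{k-1}) Z^k`.
For `ℓ < k < d` one has `P_ℓ P_k = Z^ℓ (P Z^{k-ℓ} P) Z^{-k} = 0`, since `⟨J|Z^m|J⟩ = 0` for
`0 < m < d`; so the product of reflections is `1 - 2 ∑ P_ℓ`. At `k = d` the `P_ℓ` are the
projections onto the Fourier basis and sum to `1`, while `Z^d = 1` and `ω^{d/2} = -1`.
-/

theorem geom_sum_eq_zero_of_pow_eq_one {K : Type*} [DivisionRing K] {x : K} {n : ℕ}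
    (hx : x ^ n = 1) (hx1 : x ≠ 1) : ∑ i ∈ range n, x ^ i = 0 := by
  rw [geom_sum_eq hx1, hx, sub_self, zero_div]

theorem Complex.mem_unitary_of_pow_eq_one {z : ℂ} {n : ℕ} (h : z ^ n = 1) (hn : n ≠ 0) :
    z ∈ unitary ℂ := by
  rw [Unitary.mem_iff_star_mul_self, star_def, conj_mul', norm_eq_one_of_pow_eq_one h hn]
  simp

theorem Complex.exp_pi_mul_I_div_pow_self {d : ℕ} (hd : d ≠ 0) :
    exp (Real.pi * I / d) ^ d = -1 := by
  rw [← exp_nat_mul, mul_div_cancel₀ _ (Nat.cast_ne_zero.mpr hd), exp_pi_mul_I]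

theorem Matrix.diagonal_mem_unitary {n α : Type*} [Fintype n] [DecidableEq n] [Semiring α]
    [StarRing α] {w : n → α} (hw : ∀ i, w i ∈ unitary α) :
    diagonal w ∈ unitary (Matrix n n α) := by
  simp only [Unitary.mem_iff, star_eq_conjTranspose, diagonal_conjTranspose, diagonal_mul_diagonal,
    ← diagonal_one, diagonal_eq_diagonal_iff, Pi.star_apply]
  exact ⟨fun i => Unitary.star_mul_self_of_mem (hw i), fun i => Unitary.mul_star_self_of_mem (hw i)⟩

section Reflection

variable {𝕜 R : Type*} [CommSemiring 𝕜] [Ring R] [Algebra 𝕜 R]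

theorem IsStarProjection.one_sub_two_smul_mem_unitary [StarRing R] {p : R}
    (hp : IsStarProjection p) : 1 - (2 : 𝕜) • p ∈ unitary R := by
  convert hp.one_sub.two_mul_sub_one_mem_unitary using 1
  rw [two_smul]
  noncomm_ring

theorem one_sub_smul_mul_one_sub_smul_of_mul_eq_zero (c : 𝕜) {S Q : R} (h : S * Q = 0) :
    (1 - c • S) * (1 - c • Q) = 1 - c • (S + Q) := by
  rw [sub_mul, one_mul, mul_sub, mul_one, smul_mul_assoc, mul_smul_comm, h, smul_zero, smul_zero,
    sub_zero, smul_add]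
  abel

variable [StarMul R] {P Z : R}

theorem mul_one_sub_smul_of_mem_unitary (c : 𝕜) {U : R} (hU : U ∈ unitary R) :
    U * (1 - c • P) = (1 - c • (U * P * star U)) * U := by
  rw [mul_sub, sub_mul, mul_one, one_mul, mul_smul_comm, smul_mul_assoc, mul_assoc, mul_assoc,
    Unitary.star_mul_self_of_mem hU, mul_one]

theorem conj_pow_mul_conj_pow_eq_zero (hZ : Z ∈ unitary R) {m : ℕ} (hP : P * Z ^ (m + 1) * P = 0)
    (ℓ : ℕ) :
    Z ^ ℓ * P * star Z ^ ℓ * (Z ^ (ℓ + m + 1) * P * star Z ^ (ℓ + m + 1)) = 0 :=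
  calc Z ^ ℓ * P * star Z ^ ℓ * (Z ^ (ℓ + m + 1) * P * star Z ^ (ℓ + m + 1))
      = Z ^ ℓ * (P * (star (Z ^ ℓ) * Z ^ ℓ) * Z ^ (m + 1) * P) * star Z ^ (ℓ + m + 1) := by
        rw [star_pow, add_assoc, pow_add]; noncomm_ring
    _ = 0 := by
        rw [Unitary.star_mul_self_of_mem (pow_mem hZ ℓ), mul_one, hP, mul_zero, zero_mul]

theorem pow_one_sub_smul_mul_of_mem_unitary (c : 𝕜) (hZ : Z ∈ unitary R) {k : ℕ}
    (hP : ∀ m, 0 < m → m < k → P * Z ^ m * P = 0) :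
    ((1 - c • P) * Z) ^ k = (1 - c • ∑ ℓ ∈ range k, Z ^ ℓ * P * star Z ^ ℓ) * Z ^ k := by
  induction k with
  | zero => simp
  | succ k ih =>
    have orthogonal :
        (∑ ℓ ∈ range k, Z ^ ℓ * P * star Z ^ ℓ) * (Z ^ k * P * star Z ^ k) = 0 := by
      rw [sum_mul]
      refine sum_eq_zero fun ℓ hℓ => ?_
      obtain ⟨m, rfl⟩ := Nat.exists_eq_add_of_lt (mem_range.mp hℓ)
      exact conj_pow_mul_conj_pow_eq_zero hZ (hP (m + 1) m.succ_pos (by omega)) ℓ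
    calc ((1 - c • P) * Z) ^ (k + 1)
        = (1 - c • ∑ ℓ ∈ range k, Z ^ ℓ * P * star Z ^ ℓ) * (Z ^ k * (1 - c • P)) * Z := by
          rw [pow_succ, ih fun m hm0 hmk => hP m hm0 (by omega)]; noncomm_ring
      _ = (1 - c • ∑ ℓ ∈ range k, Z ^ ℓ * P * star Z ^ ℓ) * (1 - c • (Z ^ k * P * star Z ^ k))
            * Z ^ (k + 1) := by
          rw [mul_one_sub_smul_of_mem_unitary c (pow_mem hZ k), star_pow, pow_succ]
          noncomm_ring
      _ = (1 - c • ∑ ℓ ∈ range (k + 1), Z ^ ℓ * P * star Z ^ ℓ) * Z ^ (k + 1) := by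
          rw [one_sub_smul_mul_one_sub_smul_of_mul_eq_zero c orthogonal, sum_range_succ]

end Reflection

section Clock

variable {d : ℕ} {ω : ℂ}

noncomputable def clockMatrix (d : ℕ) (ω : ℂ) : Matrix (Fin d) (Fin d) ℂ :=
  diagonal fun i => ω ^ (i : ℕ)

noncomputable def uniformProjection (d : ℕ) : Matrix (Fin d) (Fin d) ℂ :=
  of fun _ _ => (d : ℂ)⁻¹

theorem vecMulVec_inv_sqrt_eq_uniformProjection :
    (vecMulVec (fun _ : Fin d => (1 : ℂ) / Real.sqrt d) fun _ => starRingEnd ℂ (1 / Real.sqrt d))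
      = uniformProjection d := by
  ext i j
  simp only [uniformProjection, vecMulVec_apply, one_div, map_inv₀, conj_ofReal, of_apply]
  rw [← mul_inv, ← ofReal_mul, Real.mul_self_sqrt (Nat.cast_nonneg _), ofReal_natCast]

theorem isStarProjection_uniformProjection (hd : d ≠ 0) :
    IsStarProjection (uniformProjection d) where
  isIdempotentElem := by
    ext i j
    simp only [uniformProjection, mul_apply, of_apply, sum_const, card_univ, Fintype.card_fin,
      nsmul_eq_mul]
    field_simp
  isSelfAdjoint := by
    ext i j
    simp [uniformProjection]

theorem clockMatrix_pow (n : ℕ) :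
    clockMatrix d ω ^ n = diagonal fun i : Fin d => (ω ^ (i : ℕ)) ^ n := by
  rw [clockMatrix, diagonal_pow]
  rfl

theorem clockMatrix_pow_self (hω : ω ^ d = 1) : clockMatrix d ω ^ d = 1 := by
  simp_rw [clockMatrix_pow, ← pow_mul, mul_comm _ d, pow_mul, hω, one_pow, diagonal_one]

theorem clockMatrix_mem_unitary (hω : ω ^ d = 1) (hd : d ≠ 0) : clockMatrix d ω ∈ unitary _ :=
  diagonal_mem_unitary fun _ => pow_mem (mem_unitary_of_pow_eq_one hω hd) _

theorem IsPrimitiveRoot.sum_range_pow_mul_star_pow (hω : IsPrimitiveRoot ω d) (i j : Fin d) :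
    ∑ ℓ ∈ range d, (ω ^ (i : ℕ) * star (ω ^ (j : ℕ))) ^ ℓ = if i = j then (d : ℂ) else 0 := by
  have hu (n : ℕ) : ω ^ n ∈ unitary ℂ :=
    pow_mem (mem_unitary_of_pow_eq_one hω.pow_eq_one i.pos.ne') n
  split_ifs with hij
  · rw [hij, Unitary.mul_star_self_of_mem (hu _)]
    simp
  refine geom_sum_eq_zero_of_pow_eq_one ?_ fun h => hij (Fin.ext (hω.pow_inj i.isLt j.isLt ?_))
  · rw [mul_pow, ← star_pow, ← pow_mul, ← pow_mul, mul_comm (i : ℕ), mul_comm (j : ℕ), pow_mul,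
      pow_mul, hω.pow_eq_one, one_pow, one_pow, star_one, mul_one]
  · calc ω ^ (i : ℕ) = ω ^ (i : ℕ) * star (ω ^ (j : ℕ)) * ω ^ (j : ℕ) := by
          rw [mul_assoc, Unitary.star_mul_self_of_mem (hu _), mul_one]
      _ = ω ^ (j : ℕ) := by rw [h, one_mul]

theorem uniformProjection_mul_clockMatrix_pow_mul (hω : IsPrimitiveRoot ω d) {m : ℕ}
    (hm0 : 0 < m) (hmd : m < d) :
    uniformProjection d * clockMatrix d ω ^ m * uniformProjection d = 0 := by
  ext i j
  have hsum : ∑ x ∈ range d, (ω ^ m) ^ x = 0 :=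
    geom_sum_eq_zero_of_pow_eq_one (by rw [← pow_mul, mul_comm, pow_mul, hω.pow_eq_one, one_pow])
      (hω.pow_ne_one_of_pos_of_lt hm0.ne' hmd)
  rw [clockMatrix_pow, Matrix.mul_apply]
  simp only [Matrix.mul_diagonal, uniformProjection, of_apply, Matrix.zero_apply]
  simp_rw [← sum_mul, ← mul_sum, ← pow_mul, mul_comm _ m, pow_mul]
  rw [Fin.sum_univ_eq_sum_range (fun x => (ω ^ m) ^ x), hsum, mul_zero, zero_mul]

theorem sum_clockMatrix_pow_mul_uniformProjection_mul_star_pow (hω : IsPrimitiveRoot ω d) :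
    ∑ ℓ ∈ range d, clockMatrix d ω ^ ℓ * uniformProjection d * star (clockMatrix d ω) ^ ℓ = 1 := by
  ext i j
  have hterm (ℓ : ℕ) :
      (clockMatrix d ω ^ ℓ * uniformProjection d * star (clockMatrix d ω) ^ ℓ) i j
        = (d : ℂ)⁻¹ * (ω ^ (i : ℕ) * star (ω ^ (j : ℕ))) ^ ℓ := by
    rw [← star_pow, clockMatrix_pow, star_eq_conjTranspose, diagonal_conjTranspose, mul_diagonal,
      diagonal_mul]
    simp only [uniformProjection, of_apply, Pi.star_apply, star_pow, mul_pow]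
    ring
  rw [Matrix.sum_apply]
  simp_rw [hterm]
  rw [← mul_sum, hω.sum_range_pow_mul_star_pow, one_apply]
  split_ifs
  · exact inv_mul_cancel₀ (Nat.cast_ne_zero.mpr i.pos.ne')
  · exact mul_zero _

end Clock

-- `Z^{-ℓ}` is written `(star Z) ^ ℓ`.
/-- `B₁ = ω^{1/2}(I − 2|J⟩⟨J|)Z` is unitary, satisfies
`B₁^k = ω^{k/2}(I − 2∑_{ℓ<k} Z^ℓ|J⟩⟨J|Z^{−ℓ})Z^k` for `1 ≤ k ≤ d`
(where `Z^{-ℓ}` is written as `(star Z)^ℓ` since `Z` is unitary), and `B₁^d = I`. -/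
theorem B1_powers (d : ℕ) (hd : 2 ≤ d)
    (ω : ℂ) (hω : ω = Complex.exp (2 * Real.pi * I / d))
    (ωhalf : ℂ) (hωhalf : ωhalf = Complex.exp (Real.pi * I / d))
    (Z : Matrix (Fin d) (Fin d) ℂ)
    (hZ : Z = Matrix.diagonal fun i : Fin d => ω ^ (i : ℕ))
    (J : Fin d → ℂ) (hJ : J = fun _ => (1 : ℂ) / Real.sqrt d)
    (Jproj : Matrix (Fin d) (Fin d) ℂ)
    (hJproj : Jproj = Matrix.vecMulVec J fun i => (starRingEnd ℂ) (J i))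
    (B₁ : Matrix (Fin d) (Fin d) ℂ)
    (hB₁ : B₁ = ωhalf • ((1 - (2 : ℂ) • Jproj) * Z)) :
    (B₁ * star B₁ = 1 ∧ star B₁ * B₁ = 1) ∧
    (∀ k : ℕ, 1 ≤ k → k ≤ d →
      B₁ ^ k = ωhalf ^ k •
        ((1 - (2 : ℂ) • ∑ ℓ ∈ Finset.range k, Z ^ ℓ * Jproj * (star Z) ^ ℓ) * Z ^ k)) ∧
    B₁ ^ d = 1 := by
  have hd0 : d ≠ 0 := by omega
  have hprim : IsPrimitiveRoot ω d := hω ▸ isPrimitiveRoot_exp d hd0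
  have hhalf : ωhalf ^ d = -1 := hωhalf ▸ exp_pi_mul_I_div_pow_self hd0
  have hZ' : Z = clockMatrix d ω := hZ
  have hP : Jproj = uniformProjection d := by
    rw [hJproj, hJ]
    exact vecMulVec_inv_sqrt_eq_uniformProjection
  subst hZ' hP
  have hZu := clockMatrix_mem_unitary hprim.pow_eq_one hd0
  have hpow (k : ℕ) (hk : k ≤ d) : B₁ ^ k = ωhalf ^ k • ((1 - (2 : ℂ) • ∑ ℓ ∈ range k,
      clockMatrix d ω ^ ℓ * uniformProjection d * star (clockMatrix d ω) ^ ℓ) *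
        clockMatrix d ω ^ k) := by
    rw [hB₁, smul_pow, pow_one_sub_smul_mul_of_mem_unitary _ hZu
      fun m hm0 hmk => uniformProjection_mul_clockMatrix_pow_mul hprim hm0 (by omega)]
  have hunitary : B₁ ∈ unitary _ := hB₁ ▸ Unitary.smul_mem_of_mem
    (mem_unitary_of_pow_eq_one (n := 2 * d) (by rw [pow_mul', hhalf, neg_one_sq]) (by omega))
    (mul_mem (isStarProjection_uniformProjection hd0).one_sub_two_smul_mem_unitary hZu)
  refine ⟨⟨Unitary.mul_star_self_of_mem hunitary, Unitary.star_mul_self_of_mem hunitary⟩,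
    fun k _ hk => hpow k hk, ?_⟩
  rw [hpow d le_rfl, sum_clockMatrix_pow_mul_uniformProjection_mul_star_pow hprim,
    clockMatrix_pow_self hprim.pow_eq_one, hhalf, mul_one]
  module
end

section
/- Let H be a Hilbert space and B₀, B₁ unitary operators on H with B₀^d = B₁^d = I. For 1 ≤ k ≤ d−1 define C_{0,k} = r_k B₀^{−k} + conj(r_k) ω^k B₁^{−k} and C_{1,k} = conj(r_k) B₀^{−k} + r_k B₁^{−k}, where ω = exp(2πi/d) and r_k = (1/√2)exp(2πi(2k−d)/(8d)). Then for each s ∈ {0,1} and 1 ≤ k ≤ d−1, the adjoint of C_{s,k} equals C_{s,d−k}, and ∑_{k=1}^{d−1} (C_{0,k}† C_{0,k} + C_{1,k}† C_{1,k}) = 2(d−1)·I. -/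
open Complex

/-- For unitaries `B₀, B₁` of order dividing `d` and
`C_{0,k} = r_k B₀^{−k} + conj(r_k) ω^k B₁^{−k}`,
`C_{1,k} = conj(r_k) B₀^{−k} + r_k B₁^{−k}` (negative powers written via `star`),
one has `C_{s,k}† = C_{s,d−k}` and
`∑_{k=1}^{d−1} (C_{0,k}† C_{0,k} + C_{1,k}† C_{1,k}) = 2(d−1)·I`. -/
theorem C_operators_identities
    {H : Type*} [NormedAddCommGroup H] [InnerProductSpace ℂ H] [CompleteSpace H]
    (d : ℕ) (hd : 2 ≤ d)
    (ω : ℂ) (hω : ω = Complex.exp (2 * Real.pi * I / d))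
    (r : ℕ → ℂ)
    (hr : ∀ k, r k = (1 / Real.sqrt 2) *
      Complex.exp (2 * Real.pi * I * (2 * (k : ℂ) - d) / (8 * d)))
    (B₀ B₁ : H →L[ℂ] H)
    (hB₀ : B₀ ∈ unitary (H →L[ℂ] H)) (hB₁ : B₁ ∈ unitary (H →L[ℂ] H))
    (hB₀d : B₀ ^ d = 1) (hB₁d : B₁ ^ d = 1)
    (C : Fin 2 → ℕ → (H →L[ℂ] H))
    (hC0 : ∀ k, C 0 k = r k • (star B₀) ^ k + ((starRingEnd ℂ) (r k) * ω ^ k) • (star B₁) ^ k)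
    (hC1 : ∀ k, C 1 k = (starRingEnd ℂ) (r k) • (star B₀) ^ k + r k • (star B₁) ^ k) :
    (∀ s : Fin 2, ∀ k, 1 ≤ k → k ≤ d - 1 → star (C s k) = C s (d - k)) ∧
    ∑ k ∈ Finset.Icc 1 (d - 1), (star (C 0 k) * C 0 k + star (C 1 k) * C 1 k) =
      (2 * ((d : ℂ) - 1)) • (1 : H →L[ℂ] H) := by
  have hd0 : (d : ℂ) ≠ 0 := Nat.cast_ne_zero.mpr (by omega)
  -- scalar facts
  have hωne : ω ≠ 0 := by rw [hω]; exact Complex.exp_ne_zero _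
  have hconjω : (starRingEnd ℂ) ω = ω⁻¹ := by
    rw [hω, ← Complex.exp_conj, ← Complex.exp_neg]
    congr 1
    simp [map_div₀, Complex.conj_I, map_ofNat]
    ring
  have hωd : ω ^ d = 1 := by
    rw [hω, ← Complex.exp_nat_mul]
    rw [show (d : ℂ) * (2 * Real.pi * I / d) = 2 * Real.pi * I by field_simp]
    exact Complex.exp_two_pi_mul_I
  have hωk : ∀ k : ℕ, (starRingEnd ℂ) ω ^ k * ω ^ k = 1 := by
    intro k
    rw [hconjω, ← mul_pow, inv_mul_cancel₀ hωne, one_pow]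
  have hcr : ∀ k : ℕ, (starRingEnd ℂ) (r k) =
      ((1 / Real.sqrt 2 : ℝ) : ℂ) *
        Complex.exp (-(2 * Real.pi * I * (2 * (k : ℂ) - d) / (8 * d))) := by
    intro k
    rw [hr, map_mul, ← Complex.exp_conj]
    push_cast
    congr 1
    · simp
    · congr 1
      simp [map_div₀, Complex.conj_I, map_ofNat]
      ring
  have hc2 : (1 / ((Real.sqrt 2 : ℝ) : ℂ)) * (1 / ((Real.sqrt 2 : ℝ) : ℂ)) = 1 / 2 := by
    rw [div_mul_div_comm, one_mul,
      show ((Real.sqrt 2 : ℝ) : ℂ) * ((Real.sqrt 2 : ℝ) : ℂ) = 2 by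
        norm_cast; exact Real.mul_self_sqrt (by norm_num)]
  have hba : ∀ k : ℕ, (starRingEnd ℂ) (r k) * r k = 1 / 2 := by
    intro k
    rw [hcr, hr]
    push_cast
    rw [mul_mul_mul_comm]
    rw [hc2, ← Complex.exp_add, neg_add_cancel, Complex.exp_zero, mul_one]
  have hkey : ∀ k : ℕ, (starRingEnd ℂ) (r k) ^ 2 * ω ^ k + r k ^ 2 = 0 := by
    intro k
    have h1 : (starRingEnd ℂ) (r k) ^ 2 * ω ^ k = -(r k ^ 2) := by
      rw [hcr, hr, hω, mul_pow, mul_pow, ← Complex.exp_nat_mul, ← Complex.exp_nat_mul,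
        ← Complex.exp_nat_mul, mul_assoc, ← Complex.exp_add]
      rw [show ((2 : ℕ) : ℂ) * -(2 * Real.pi * I * (2 * (k : ℂ) - d) / (8 * d)) +
            (k : ℂ) * (2 * Real.pi * I / d) =
          ((2 : ℕ) : ℂ) * (2 * Real.pi * I * (2 * (k : ℂ) - d) / (8 * d)) + Real.pi * I from by
        field_simp; ring]
      rw [Complex.exp_add, Complex.exp_pi_mul_I]
      push_cast
      ring
    rw [h1]; ring
  have hkey2 : ∀ k : ℕ, r k ^ 2 * (starRingEnd ℂ) ω ^ k + (starRingEnd ℂ) (r k) ^ 2 = 0 := by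
    intro k
    linear_combination (starRingEnd ℂ) ω ^ k * hkey k - (starRingEnd ℂ) (r k) ^ 2 * hωk k
  -- operator facts
  have hP : ∀ k : ℕ, B₀ ^ k * (star B₀) ^ k = 1 := fun k => by
    rw [← star_pow]; exact Unitary.mul_star_self_of_mem (pow_mem hB₀ k)
  have hP' : ∀ k : ℕ, (star B₀) ^ k * B₀ ^ k = 1 := fun k => by
    rw [← star_pow]; exact Unitary.star_mul_self_of_mem (pow_mem hB₀ k)
  have hQ : ∀ k : ℕ, B₁ ^ k * (star B₁) ^ k = 1 := fun k => by
    rw [← star_pow]; exact Unitary.mul_star_self_of_mem (pow_mem hB₁ k)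
  have hQ' : ∀ k : ℕ, (star B₁) ^ k * B₁ ^ k = 1 := fun k => by
    rw [← star_pow]; exact Unitary.star_mul_self_of_mem (pow_mem hB₁ k)
  have hU : ∀ k, k ≤ d → (star B₀) ^ (d - k) = B₀ ^ k := by
    intro k hk
    have h2 : (star B₀) ^ (d - k) * (star B₀) ^ k = 1 := by
      rw [← pow_add, Nat.sub_add_cancel hk, ← star_pow, hB₀d, star_one]
    calc (star B₀) ^ (d - k) = (star B₀) ^ (d - k) * ((star B₀) ^ k * B₀ ^ k) := by
          rw [hP', mul_one]
      _ = ((star B₀) ^ (d - k) * (star B₀) ^ k) * B₀ ^ k := by rw [mul_assoc]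
      _ = B₀ ^ k := by rw [h2, one_mul]
  have hV : ∀ k, k ≤ d → (star B₁) ^ (d - k) = B₁ ^ k := by
    intro k hk
    have h2 : (star B₁) ^ (d - k) * (star B₁) ^ k = 1 := by
      rw [← pow_add, Nat.sub_add_cancel hk, ← star_pow, hB₁d, star_one]
    calc (star B₁) ^ (d - k) = (star B₁) ^ (d - k) * ((star B₁) ^ k * B₁ ^ k) := by
          rw [hQ', mul_one]
      _ = ((star B₁) ^ (d - k) * (star B₁) ^ k) * B₁ ^ k := by rw [mul_assoc]
      _ = B₁ ^ k := by rw [h2, one_mul]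
  -- star formulas
  have hstar0 : ∀ k : ℕ, star (C 0 k) =
      (starRingEnd ℂ) (r k) • B₀ ^ k + (r k * (starRingEnd ℂ) ω ^ k) • B₁ ^ k := by
    intro k
    rw [hC0, star_add, star_smul, star_smul, star_pow, star_pow, star_star, star_star]
    simp [Complex.star_def, map_mul, map_pow]
  have hstar1 : ∀ k : ℕ, star (C 1 k) =
      r k • B₀ ^ k + (starRingEnd ℂ) (r k) • B₁ ^ k := by
    intro k
    rw [hC1, star_add, star_smul, star_smul, star_pow, star_pow, star_star, star_star]
    simp [Complex.star_def]
  have hprod : ∀ k : ℕ, star (C 0 k) * C 0 k + star (C 1 k) * C 1 k =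
      (2 : ℂ) • (1 : H →L[ℂ] H) := by
    intro k
    rw [hstar0 k, hstar1 k, hC0, hC1]
    simp only [add_mul, mul_add, smul_mul_smul_comm, hP k, hP' k, hQ k, hQ' k]
    match_scalars
    · linear_combination (3 + (starRingEnd ℂ) ω ^ k * ω ^ k) * hba k + (1 / 2) * hωk k
    · linear_combination hkey2 k
    · linear_combination hkey k
  refine ⟨?_, ?_⟩
  · intro s k hk1 hk2
    have hkd : k ≤ d := by omega
    have hcast : ((d - k : ℕ) : ℂ) = (d : ℂ) - k := by
      rw [Nat.cast_sub hkd]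
    have hrdk : r (d - k) = (starRingEnd ℂ) (r k) := by
      rw [hr, hcr, hcast]
      push_cast
      congr 1
      ring
    have hconjrdk : (starRingEnd ℂ) (r (d - k)) = r k := by
      rw [hrdk, Complex.conj_conj]
    have hωdk : ω ^ (d - k) = (starRingEnd ℂ) ω ^ k := by
      rw [hconjω, pow_sub₀ ω hωne hkd, hωd, one_mul, inv_pow]
    fin_cases s
    · show star (C 0 k) = C 0 (d - k)
      rw [hstar0 k, hC0 (d - k), hωdk, hU k hkd, hV k hkd, hrdk, Complex.conj_conj]
    · show star (C 1 k) = C 1 (d - k)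
      rw [hstar1 k, hC1 (d - k), hU k hkd, hV k hkd, hrdk, Complex.conj_conj]
  · rw [Finset.sum_congr rfl fun k _ => hprod k, Finset.sum_const, Nat.card_Icc,
      show d - 1 + 1 - 1 = d - 1 from by omega,
      ← Nat.cast_smul_eq_nsmul ℂ, smul_smul, Nat.cast_sub (by omega : 1 ≤ d), Nat.cast_one,
      mul_comm]
end

section
/- Let H_A, H_B be Hilbert spaces, A₀, A₁ unitaries on H_A and B₀, B₁ unitaries on H_B, all satisfying X^d = I, and let O_d = ∑_{k=1}^{d−1} (r_k A₀^k ⊗ B₀^{−k} + conj(r_k) ω^k A₀^k ⊗ B₁^{−k} + conj(r_k) A₁^k ⊗ B₀^{−k} + r_k A₁^k ⊗ B₁^{−k}) be the SATWAP Bell operator. Then O_d = 2(d−1)·I − (1/2)∑_{k=1}^{d−1}(M_{0,k} M_{0,k}† + M_{1,k} M_{1,k}†), where M_{s,k} = A_s^k ⊗ I − I ⊗ C_{s,k}†, with C_{0,k} = r_k B₀^{−k} + conj(r_k)ω^k B₁^{−k} and C_{1,k} = conj(r_k) B₀^{−k} + r_k B₁^{−k}. Consequently, for every unit vector |ψ⟩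 ∈ H_A ⊗ H_B, ⟨ψ|O_d|ψ⟩ ≤ 2(d−1), with equality iff M_{s,k}†|ψ⟩ = 0 for all s ∈ {0,1}, 1 ≤ k ≤ d−1. -/
/-!
Expanding with `A_s^k (A_s^k)† = 1` gives
`M_{s,k} M_{s,k}† = 1 + 1 ⊗ C_{s,k}† C_{s,k} - A_s^k ⊗ C_{s,k} - (A_s^k ⊗ C_{s,k})†`.
The phases satisfy `|r_k|² = 1/2` and `r_k² + conj(r_k)² ω^k = 0`, so the cross terms of
`C_{0,k}† C_{0,k} + C_{1,k}† C_{1,k}` cancel and this sum is `2`. Since `r_{d-k} = conj r_k` and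
`(X^k)† = X^{d-k}` for unitaries with `X^d = 1`, we get `C_{s,k}† = C_{s,d-k}`, so the adjoint terms
are the terms `A_s^{d-k} ⊗ C_{s,d-k}` of `O_d` re-indexed. Summing over `s` and `k` gives
`∑ M M† = 4(d-1) - 2 O_d`. Finally `⟨ψ| M M† |ψ⟩ = ‖M† ψ‖² ≥ 0`, which yields the bound and its
equality case.
-/

open Complex Matrix Kronecker

section Unitary
variable {R : Type*} [Monoid R] [StarMul R]

theorem star_pow_eq_pow_sub_of_pow_eq_one {X : R} (hX : X ∈ unitary R) {d k : ℕ}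
    (hXd : X ^ d = 1) (hk : k ≤ d) : star (X ^ k) = X ^ (d - k) := by
  calc star (X ^ k) = star (X ^ k) * (X ^ k * X ^ (d - k)) := by
        rw [← pow_add, Nat.add_sub_cancel' hk, hXd, mul_one]
    _ = X ^ (d - k) := by rw [← mul_assoc, Unitary.star_mul_self_of_mem (pow_mem hX k), one_mul]

end Unitary

theorem star_mul_add_star_mul_eq_two {A : Type*} [Ring A] [StarRing A] [Algebra ℂ A]
    [StarModule ℂ A] {U V : A} (hU : U ∈ unitary A) (hV : V ∈ unitary A) {a b c e : ℂ}
    (hac : star a * a + star c * c = 1) (hbe : star b * b + star e * e = 1)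
    (hcross : star a * b + star c * e = 0) :
    star (a • U + b • V) * (a • U + b • V) + star (c • U + e • V) * (c • U + e • V) = 2 := by
  have hcross' : star b * a + star e * c = 0 := by
    simpa [mul_comm] using congrArg star hcross
  simp only [star_add, star_smul, add_mul, mul_add, smul_mul_smul_comm,
    Unitary.star_mul_self_of_mem hU, Unitary.star_mul_self_of_mem hV]
  calc _ = (star a * a + star c * c) • (1 : A) + (star b * b + star e * e) • (1 : A)
        + (star a * b + star c * e) • (star U * V) + (star b * a + star e * c) • (star V * U) := by
        simp only [add_smul]; abel
    _ = 2 := by rw [hac, hbe, hcross, hcross']; simp [one_add_one_eq_two]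

theorem Finset.sum_Icc_one_sub_reflect {M : Type*} [AddCommMonoid M] (f : ℕ → M) (d : ℕ) :
    ∑ k ∈ Icc 1 (d - 1), f (d - k) = ∑ k ∈ Icc 1 (d - 1), f k := by
  refine Finset.sum_nbij' (fun k => d - k) (fun k => d - k) ?_ ?_ ?_ ?_ ?_ <;>
    intro k hk <;> simp only [Finset.mem_Icc] at hk ⊢ <;> omega

namespace Matrix
variable {R l m n p σ : Type*}

theorem kronecker_sum [CommSemiring R] (X : Matrix l m R) (s : Finset σ) (Y : σ → Matrix n p R) :
    X ⊗ₖ ∑ i ∈ s, Y i = ∑ i ∈ s, X ⊗ₖ Y i := by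
  ext
  simp [Matrix.sum_apply, Finset.mul_sum]

theorem star_kronecker [CommSemiring R] [StarRing R] (X : Matrix l l R) (Y : Matrix n n R) :
    star (X ⊗ₖ Y) = star X ⊗ₖ star Y :=
  conjTranspose_kronecker X Y

end Matrix

section SumOfSquares
variable {R : Type*} [CommRing R] [StarRing R] {ι κ σ : Type*} [Fintype ι] [DecidableEq ι]

theorem kronecker_one_sub_one_kronecker_mul_star [Fintype κ] [DecidableEq κ]
    {X : Matrix ι ι R} (hX : X ∈ unitary (Matrix ι ι R)) (Y : Matrix κ κ R) :
    (X ⊗ₖ 1 - 1 ⊗ₖ star Y) * star (X ⊗ₖ 1 - 1 ⊗ₖ star Y) =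
      1 + 1 ⊗ₖ (star Y * Y) - X ⊗ₖ Y - star (X ⊗ₖ Y) := by
  simp only [star_sub, star_kronecker, star_one, star_star, sub_mul, mul_sub,
    ← mul_kronecker_mul, one_mul, mul_one, Unitary.mul_star_self_of_mem hX, one_kronecker_one]
  abel

variable [Fintype σ] {X : σ → Matrix ι ι R} {C : σ → ℕ → Matrix κ κ R} {d : ℕ}

theorem isSelfAdjoint_sum_Icc_sum_pow_kronecker (hX : ∀ s, X s ∈ unitary (Matrix ι ι R))
    (hXd : ∀ s, X s ^ d = 1) (hC : ∀ s k, k ≤ d → star (C s k) = C s (d - k)) :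
    IsSelfAdjoint (∑ k ∈ Finset.Icc 1 (d - 1), ∑ s, (X s ^ k) ⊗ₖ C s k) := by
  have hstar : ∀ k ∈ Finset.Icc 1 (d - 1),
      star (∑ s, (X s ^ k) ⊗ₖ C s k) = ∑ s, (X s ^ (d - k)) ⊗ₖ C s (d - k) := by
    intro k hk
    have hkd : k ≤ d := by rw [Finset.mem_Icc] at hk; omega
    simp only [star_sum, star_kronecker, star_pow_eq_pow_sub_of_pow_eq_one (hX _) (hXd _) hkd,
      hC _ _ hkd]
  rw [IsSelfAdjoint, star_sum, Finset.sum_congr rfl hstar,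
    Finset.sum_Icc_one_sub_reflect (fun k => ∑ s, (X s ^ k) ⊗ₖ C s k)]

theorem sum_Icc_sum_kronecker_sub_mul_star [Fintype κ] [DecidableEq κ]
    (hX : ∀ s, X s ∈ unitary (Matrix ι ι R)) (hXd : ∀ s, X s ^ d = 1)
    (hC : ∀ s k, k ≤ d → star (C s k) = C s (d - k))
    (hCC : ∀ k, ∑ s, star (C s k) * C s k = (Fintype.card σ : R) • 1) :
    ∑ k ∈ Finset.Icc 1 (d - 1), ∑ s,
        ((X s ^ k) ⊗ₖ 1 - 1 ⊗ₖ star (C s k)) * star ((X s ^ k) ⊗ₖ 1 - 1 ⊗ₖ star (C s k)) =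
      ((2 * Fintype.card σ * (d - 1) : ℕ) : R) • 1 -
        (2 : R) • ∑ k ∈ Finset.Icc 1 (d - 1), ∑ s, (X s ^ k) ⊗ₖ C s k := by
  have hk : ∀ k, ∑ s,
      ((X s ^ k) ⊗ₖ 1 - 1 ⊗ₖ star (C s k)) * star ((X s ^ k) ⊗ₖ 1 - 1 ⊗ₖ star (C s k)) =
        ((2 * Fintype.card σ : ℕ) : R) • 1 - ∑ s, (X s ^ k) ⊗ₖ C s k -
          star (∑ s, (X s ^ k) ⊗ₖ C s k) := by
    intro k
    simp only [kronecker_one_sub_one_kronecker_mul_star (pow_mem (hX _) k),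
      Finset.sum_sub_distrib, Finset.sum_add_distrib, ← Matrix.kronecker_sum, hCC, star_sum,
      kronecker_smul, one_kronecker_one, Finset.sum_const, Finset.card_univ]
    push_cast
    module
  rw [Finset.sum_congr rfl fun k _ => hk k, Finset.sum_sub_distrib, Finset.sum_sub_distrib,
    ← star_sum, (isSelfAdjoint_sum_Icc_sum_pow_kronecker hX hXd hC).star_eq, Finset.sum_const,
    Nat.card_Icc, Nat.add_sub_cancel, ← Nat.cast_smul_eq_nsmul R, smul_smul]
  push_cast
  module

end SumOfSquares

theorem Complex.star_exp_of_conj_eq_neg {z : ℂ} (hz : (starRingEnd ℂ) z = -z) :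
    star (exp z) = exp (-z) := by
  rw [star_def, ← exp_conj, hz]

theorem exp_two_pi_I_div_mem_unitary (d : ℕ) : exp (2 * Real.pi * I / d) ∈ unitary ℂ := by
  rw [Unitary.mem_iff_star_mul_self, star_exp_of_conj_eq_neg (by simp [map_ofNat]; ring),
    ← exp_add, neg_add_cancel, exp_zero]

noncomputable def satwapCoeff (d k : ℕ) : ℂ :=
  (1 / Real.sqrt 2) * Complex.exp (2 * Real.pi * I * (2 * (k : ℂ) - d) / (8 * d))

section SatwapCoeff
variable (d k : ℕ)

theorem star_satwapCoeff : star (satwapCoeff d k) =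
    (1 / Real.sqrt 2) * exp (-(2 * Real.pi * I * (2 * (k : ℂ) - d) / (8 * d))) := by
  rw [satwapCoeff, star_mul', star_exp_of_conj_eq_neg (by simp [map_ofNat]; ring)]
  simp

theorem satwapCoeff_sub {k : ℕ} (hk : k ≤ d) :
    satwapCoeff d (d - k) = star (satwapCoeff d k) := by
  rw [star_satwapCoeff, satwapCoeff]
  push_cast [Nat.cast_sub hk]
  ring_nf

theorem star_satwapCoeff_mul_self : star (satwapCoeff d k) * satwapCoeff d k = 1 / 2 := by
  rw [star_satwapCoeff, satwapCoeff, mul_mul_mul_comm, ← exp_add, neg_add_cancel, exp_zero,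
    mul_one, div_mul_div_comm, one_mul, ← ofReal_mul, Real.mul_self_sqrt zero_le_two]
  norm_num

theorem satwapCoeff_sq_add_star_sq_mul_pow {d : ℕ} (hd : d ≠ 0) (k : ℕ) :
    satwapCoeff d k ^ 2 + star (satwapCoeff d k) ^ 2 * exp (2 * Real.pi * I / d) ^ k = 0 := by
  have hd' : (d : ℂ) ≠ 0 := Nat.cast_ne_zero.mpr hd
  rw [star_satwapCoeff, satwapCoeff]
  set z := 2 * Real.pi * I * (2 * (k : ℂ) - d) / (8 * d)
  have hphase : (2 : ℕ) * -z + k * (2 * Real.pi * I / d) = (2 : ℕ) * z + Real.pi * I := by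
    simp only [z]; field_simp; push_cast; ring
  have hrot : exp (-z) ^ 2 * exp (2 * Real.pi * I / d) ^ k = -exp z ^ 2 := by
    rw [← exp_nat_mul, ← exp_nat_mul, ← exp_add, hphase, exp_add, exp_pi_mul_I, exp_nat_mul,
      mul_neg_one]
  rw [mul_pow, mul_pow, mul_assoc _ (exp (-z) ^ 2), hrot]
  ring

end SatwapCoeff

section SatwapBobOp
variable {κ : Type*} [Fintype κ] [DecidableEq κ] {d : ℕ} {B : Fin 2 → Matrix κ κ ℂ}

/-- The paper's `C_{s,k}`. -/
noncomputable def satwapBobOp (d : ℕ) (B : Fin 2 → Matrix κ κ ℂ) (s : Fin 2) (k : ℕ) :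
    Matrix κ κ ℂ :=
  ![satwapCoeff d k • (star (B 0)) ^ k +
      ((starRingEnd ℂ) (satwapCoeff d k) * exp (2 * Real.pi * I / d) ^ k) • (star (B 1)) ^ k,
    (starRingEnd ℂ) (satwapCoeff d k) • (star (B 0)) ^ k + satwapCoeff d k • (star (B 1)) ^ k] s

theorem star_satwapBobOp (hB : ∀ t, B t ∈ unitary (Matrix κ κ ℂ)) (hBd : ∀ t, B t ^ d = 1)
    (hd : d ≠ 0) (s : Fin 2) (k : ℕ) (hk : k ≤ d) :
    star (satwapBobOp d B s k) = satwapBobOp d B s (d - k) := by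
  have hU : ∀ t, star (star (B t) ^ k) = star (B t) ^ (d - k) := fun t =>
    star_pow_eq_pow_sub_of_pow_eq_one (Unitary.star_mem (hB t))
      (by rw [← star_pow, hBd, star_one]) hk
  have hω : star (exp (2 * Real.pi * I / d) ^ k) = exp (2 * Real.pi * I / d) ^ (d - k) :=
    star_pow_eq_pow_sub_of_pow_eq_one (exp_two_pi_I_div_mem_unitary d)
      (isPrimitiveRoot_exp d hd).pow_eq_one hk
  fin_cases s <;>
    simp only [satwapBobOp, Fin.zero_eta, Fin.mk_one, cons_val_zero, cons_val_one, star_add,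
      star_smul, star_mul', hU, hω, satwapCoeff_sub d hk, starRingEnd_apply, star_star]

theorem sum_star_satwapBobOp_mul_self (hB : ∀ t, B t ∈ unitary (Matrix κ κ ℂ)) (hd : d ≠ 0)
    (k : ℕ) : ∑ s, star (satwapBobOp d B s k) * satwapBobOp d B s k = 2 := by
  simp only [Fin.sum_univ_two, satwapBobOp, cons_val_zero, cons_val_one]
  set ρ := satwapCoeff d k
  set ζ := exp (2 * Real.pi * I / d) ^ k
  have hρ : star ρ * ρ = 1 / 2 := star_satwapCoeff_mul_self d k
  have hζ : star ζ * ζ = 1 :=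
    Unitary.star_mul_self_of_mem (pow_mem (exp_two_pi_I_div_mem_unitary d) k)
  have hkey : ρ ^ 2 + star ρ ^ 2 * ζ = 0 := satwapCoeff_sq_add_star_sq_mul_pow hd k
  refine star_mul_add_star_mul_eq_two (pow_mem (Unitary.star_mem (hB 0)) k)
    (pow_mem (Unitary.star_mem (hB 1)) k) ?_ ?_ ?_ <;>
    simp only [starRingEnd_apply, star_star, star_mul']
  · linear_combination 2 * hρ
  · linear_combination (star ζ * ζ + 1) * hρ + 1 / 2 * hζ
  · linear_combination hkey

end SatwapBobOp

section QuadraticForm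
variable {ι κ : Type*} [Fintype ι]

open scoped ComplexOrder

theorem star_dotProduct_self_eq_sum_normSq (v : ι → ℂ) :
    star v ⬝ᵥ v = ((∑ i, normSq (v i) : ℝ) : ℂ) := by
  simp [dotProduct, normSq_eq_conj_mul_self]

theorem star_dotProduct_mul_star_mulVec {R : Type*} [CommSemiring R] [StarRing R]
    (N : Matrix ι ι R) (v : ι → R) :
    star v ⬝ᵥ (N * star N) *ᵥ v = star (star N *ᵥ v) ⬝ᵥ (star N *ᵥ v) := by
  rw [← mulVec_mulVec, dotProduct_mulVec, star_mulVec, star_eq_conjTranspose,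
    conjTranspose_conjTranspose]

theorem re_star_dotProduct_le_and_eq_iff [DecidableEq ι] {O : Matrix ι ι ℂ} {c : ℝ} {s : Finset κ}
    {N : κ → Matrix ι ι ℂ} (hO : O = (c : ℂ) • 1 - (2 : ℂ)⁻¹ • ∑ i ∈ s, N i * star (N i))
    {v : ι → ℂ} (hv : star v ⬝ᵥ v = 1) :
    (star v ⬝ᵥ O *ᵥ v).re ≤ c ∧ (star v ⬝ᵥ O *ᵥ v = c ↔ ∀ i ∈ s, star (N i) *ᵥ v = 0) := by
  set S := ∑ i ∈ s, star (star (N i) *ᵥ v) ⬝ᵥ (star (N i) *ᵥ v)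
  have hS : 0 ≤ S := Finset.sum_nonneg fun i _ => dotProduct_star_self_nonneg _
  have hq : star v ⬝ᵥ O *ᵥ v = c - 2⁻¹ * S := by
    simp only [hO, sub_mulVec, smul_mulVec, one_mulVec, sum_mulVec, dotProduct_sub,
      dotProduct_smul, dotProduct_sum, star_dotProduct_mul_star_mulVec, hv, smul_eq_mul, mul_one, S]
  rw [hq]
  refine ⟨?_, ?_⟩
  · simpa using (Complex.nonneg_iff.mp hS).1
  · rw [sub_eq_self, mul_eq_zero, Finset.sum_eq_zero_iff_of_nonneg fun i _ =>
      dotProduct_star_self_nonneg _]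
    simp [dotProduct_star_self_eq_zero]

end QuadraticForm

/-- Operators are modelled as matrices, and `X^{−k}` as `(star X)^k`. -/
theorem satwap_sos_decomposition
    (m n : ℕ) (d : ℕ) (hd : 2 ≤ d)
    (ω : ℂ) (hω : ω = Complex.exp (2 * Real.pi * I / d))
    (r : ℕ → ℂ)
    (hr : ∀ k, r k = (1 / Real.sqrt 2) *
      Complex.exp (2 * Real.pi * I * (2 * (k : ℂ) - d) / (8 * d)))
    (A : Fin 2 → Matrix (Fin m) (Fin m) ℂ) (B : Fin 2 → Matrix (Fin n) (Fin n) ℂ)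
    (hAu : ∀ s, A s ∈ Matrix.unitaryGroup (Fin m) ℂ)
    (hBu : ∀ t, B t ∈ Matrix.unitaryGroup (Fin n) ℂ)
    (hAd : ∀ s, A s ^ d = 1) (hBd : ∀ t, B t ^ d = 1)
    (C : Fin 2 → ℕ → Matrix (Fin n) (Fin n) ℂ)
    (hC0 : ∀ k, C 0 k = r k • (star (B 0)) ^ k +
      ((starRingEnd ℂ) (r k) * ω ^ k) • (star (B 1)) ^ k)
    (hC1 : ∀ k, C 1 k = (starRingEnd ℂ) (r k) • (star (B 0)) ^ k + r k • (star (B 1)) ^ k)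
    (M : Fin 2 → ℕ → Matrix (Fin m × Fin n) (Fin m × Fin n) ℂ)
    (hM : ∀ s k, M s k = (A s ^ k) ⊗ₖ (1 : Matrix (Fin n) (Fin n) ℂ) -
      (1 : Matrix (Fin m) (Fin m) ℂ) ⊗ₖ star (C s k))
    (Od : Matrix (Fin m × Fin n) (Fin m × Fin n) ℂ)
    (hOd : Od = ∑ k ∈ Finset.Icc 1 (d - 1),
      (r k • ((A 0 ^ k) ⊗ₖ ((star (B 0)) ^ k)) +
       ((starRingEnd ℂ) (r k) * ω ^ k) • ((A 0 ^ k) ⊗ₖ ((star (B 1)) ^ k)) +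
       (starRingEnd ℂ) (r k) • ((A 1 ^ k) ⊗ₖ ((star (B 0)) ^ k)) +
       r k • ((A 1 ^ k) ⊗ₖ ((star (B 1)) ^ k)))) :
    Od = (2 * ((d : ℂ) - 1)) • (1 : Matrix (Fin m × Fin n) (Fin m × Fin n) ℂ) -
        (2 : ℂ)⁻¹ • ∑ k ∈ Finset.Icc 1 (d - 1),
          (M 0 k * star (M 0 k) + M 1 k * star (M 1 k)) ∧
    ∀ ψ : Fin m × Fin n → ℂ, (∑ p, Complex.normSq (ψ p)) = 1 →
      (∑ p, (starRingEnd ℂ) (ψ p) * Od.mulVec ψ p).re ≤ 2 * ((d : ℝ) - 1) ∧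
      ((∑ p, (starRingEnd ℂ) (ψ p) * Od.mulVec ψ p) = 2 * ((d : ℂ) - 1) ↔
        ∀ s : Fin 2, ∀ k, 1 ≤ k → k ≤ d - 1 → (star (M s k)).mulVec ψ = 0) := by
  subst hω
  obtain rfl : r = satwapCoeff d := funext hr
  obtain rfl : C = satwapBobOp d B :=
    funext fun s => funext fun k => by fin_cases s; exacts [hC0 k, hC1 k]
  have hd0 : d ≠ 0 := by omega
  have hOd' : Od = ∑ k ∈ Finset.Icc 1 (d - 1), ∑ s, (A s ^ k) ⊗ₖ satwapBobOp d B s k := by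
    rw [hOd]
    refine Finset.sum_congr rfl fun k _ => ?_
    simp only [Fin.sum_univ_two, satwapBobOp, cons_val_zero, cons_val_one, kronecker_add,
      kronecker_smul]
    abel
  have hsum := sum_Icc_sum_kronecker_sub_mul_star hAu hAd (star_satwapBobOp hBu hBd hd0)
    fun k => by rw [sum_star_satwapBobOp_mul_self hBu hd0 k, Fintype.card_fin, Nat.cast_ofNat,
      two_smul, one_add_one_eq_two]
  simp only [← hOd', ← hM, Fintype.card_fin] at hsum
  have hdecomp : Od = ((2 * ((d : ℝ) - 1) : ℝ) : ℂ) • 1 -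
      (2 : ℂ)⁻¹ • ∑ k ∈ Finset.Icc 1 (d - 1), ∑ s, M s k * star (M s k) := by
    rw [hsum]
    push_cast [Nat.cast_sub (by omega : 1 ≤ d)]
    module
  refine ⟨by simpa [Fin.sum_univ_two] using hdecomp, fun ψ hψ => ?_⟩
  rw [← Finset.sum_product' (f := fun k s => M s k * star (M s k))] at hdecomp
  obtain ⟨hle, heq⟩ := re_star_dotProduct_le_and_eq_iff hdecomp (v := ψ)
    (by rw [star_dotProduct_self_eq_sum_normSq, hψ, ofReal_one])
  change (star ψ ⬝ᵥ Od *ᵥ ψ).re ≤ _ ∧ (star ψ ⬝ᵥ Od *ᵥ ψ = _ ↔ _)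
  push_cast at heq
  refine ⟨hle, heq.trans ?_⟩
  simp only [Finset.mem_product, Finset.mem_Icc, Finset.mem_univ, and_true, Prod.forall, and_imp]
  exact forall_comm
end

section
/- Let |ψ⟩ ∈ H_A ⊗ H_B be a unit vector whose reduced density operators on both sides are invertible, and suppose operators C_k (1 ≤ k ≤ d−1) on H_B and a unitary A on H_A with A^d = I satisfy (A^{−k} ⊗ I)|ψ⟩ = (I ⊗ C_k)|ψ⟩ for all 1 ≤ k ≤ d−1. Then C_k C_ℓ = C_{k+ℓ} whenever k + ℓ ≤ d−1, hence C_k = C_1^k, and C_1^d = I; moreover each C_k is unitary provided C_k† = C_{d−k}. -/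
open Complex Matrix Kronecker

lemma cancelB {m n : ℕ} (ψ : Fin m × Fin n → ℂ)
    (ρB : Matrix (Fin n) (Fin n) ℂ)
    (hρB : ρB = Matrix.of fun j j' => ∑ i, ψ (i, j) * (starRingEnd ℂ) (ψ (i, j')))
    (hρBinv : IsUnit ρB) (M N : Matrix (Fin n) (Fin n) ℂ)
    (h : ((1 : Matrix (Fin m) (Fin m) ℂ) ⊗ₖ M).mulVec ψ =
         ((1 : Matrix (Fin m) (Fin m) ℂ) ⊗ₖ N).mulVec ψ) : M = N := by
  set Ψ : Matrix (Fin n) (Fin m) ℂ := Matrix.of (fun j i => ψ (i, j)) with hΨ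
  have key : M * Ψ = N * Ψ := by
    ext j i
    have h2 := congrFun h (i, j)
    simpa [Matrix.mulVec, dotProduct, Fintype.sum_prod_type, Matrix.one_apply,
      Matrix.mul_apply, hΨ, ite_mul] using h2
  have hρ : ρB = Ψ * Ψᴴ := by
    rw [hρB]
    ext j j'
    simp [Matrix.mul_apply, Matrix.conjTranspose_apply, hΨ]
  refine hρBinv.mul_right_cancel ?_
  rw [hρ, ← Matrix.mul_assoc, ← Matrix.mul_assoc, key]

/-- If `(A^{−k} ⊗ I)|ψ⟩ = (I ⊗ C_k)|ψ⟩` for a unitary `A` with `A^d = I` and a state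
`ψ` with invertible reduced density operators, then `C_k C_ℓ = C_{k+ℓ}` (for `k+ℓ ≤ d−1`),
`C_k = C_1^k`, `C_1^d = I`, and each `C_k` is unitary provided `C_k† = C_{d−k}`.
Here `A^{−k}` is written `(star A)^k` since `A` is unitary. -/
theorem group_structure_of_C
    (m n : ℕ) (d : ℕ) (hd : 2 ≤ d)
    (ψ : Fin m × Fin n → ℂ) (hψ : ∑ p, Complex.normSq (ψ p) = 1)
    (ρA : Matrix (Fin m) (Fin m) ℂ)
    (hρA : ρA = Matrix.of fun i i' => ∑ j, ψ (i, j) * (starRingEnd ℂ) (ψ (i', j)))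
    (ρB : Matrix (Fin n) (Fin n) ℂ)
    (hρB : ρB = Matrix.of fun j j' => ∑ i, ψ (i, j) * (starRingEnd ℂ) (ψ (i, j')))
    (hρAinv : IsUnit ρA) (hρBinv : IsUnit ρB)
    (A : Matrix (Fin m) (Fin m) ℂ) (hAu : A ∈ Matrix.unitaryGroup (Fin m) ℂ)
    (hAd : A ^ d = 1)
    (C : ℕ → Matrix (Fin n) (Fin n) ℂ)
    (hC : ∀ k, 1 ≤ k → k ≤ d - 1 →
      (((star A) ^ k) ⊗ₖ (1 : Matrix (Fin n) (Fin n) ℂ)).mulVec ψ =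
      ((1 : Matrix (Fin m) (Fin m) ℂ) ⊗ₖ C k).mulVec ψ) :
    (∀ k ℓ, 1 ≤ k → 1 ≤ ℓ → k + ℓ ≤ d - 1 → C k * C ℓ = C (k + ℓ)) ∧
    (∀ k, 1 ≤ k → k ≤ d - 1 → C k = C 1 ^ k) ∧
    C 1 ^ d = 1 ∧
    ((∀ k, 1 ≤ k → k ≤ d - 1 → star (C k) = C (d - k)) →
      ∀ k, 1 ≤ k → k ≤ d - 1 → C k ∈ Matrix.unitaryGroup (Fin n) ℂ) := by
  have hstep : ∀ k ℓ, 1 ≤ k → k ≤ d - 1 → 1 ≤ ℓ → ℓ ≤ d - 1 →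
      (((star A) ^ (k + ℓ)) ⊗ₖ (1 : Matrix (Fin n) (Fin n) ℂ)).mulVec ψ =
      ((1 : Matrix (Fin m) (Fin m) ℂ) ⊗ₖ (C k * C ℓ)).mulVec ψ := by
    intro k ℓ hk1 hk2 hl1 hl2
    calc (((star A) ^ (k + ℓ)) ⊗ₖ (1 : Matrix (Fin n) (Fin n) ℂ)).mulVec ψ
        = ((((star A) ^ ℓ) * ((star A) ^ k)) ⊗ₖ
            ((1 : Matrix (Fin n) (Fin n) ℂ) * 1)).mulVec ψ := by
          rw [← pow_add, add_comm ℓ k, mul_one]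
      _ = (((star A) ^ ℓ) ⊗ₖ (1 : Matrix (Fin n) (Fin n) ℂ)).mulVec
            ((((star A) ^ k) ⊗ₖ (1 : Matrix (Fin n) (Fin n) ℂ)).mulVec ψ) := by
          rw [Matrix.mul_kronecker_mul, ← Matrix.mulVec_mulVec]
      _ = (((star A) ^ ℓ) ⊗ₖ (1 : Matrix (Fin n) (Fin n) ℂ)).mulVec
            (((1 : Matrix (Fin m) (Fin m) ℂ) ⊗ₖ C k).mulVec ψ) := by
          rw [hC k hk1 hk2]
      _ = ((((star A) ^ ℓ) * 1) ⊗ₖ ((1 : Matrix (Fin n) (Fin n) ℂ) * C k)).mulVec ψ := by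
          rw [Matrix.mulVec_mulVec, ← Matrix.mul_kronecker_mul]
      _ = (((1 : Matrix (Fin m) (Fin m) ℂ)) ⊗ₖ C k).mulVec
            ((((star A) ^ ℓ) ⊗ₖ (1 : Matrix (Fin n) (Fin n) ℂ)).mulVec ψ) := by
          rw [Matrix.mulVec_mulVec, ← Matrix.mul_kronecker_mul, mul_one, one_mul,
            Matrix.one_mul, Matrix.mul_one]
      _ = (((1 : Matrix (Fin m) (Fin m) ℂ)) ⊗ₖ C k).mulVec
            (((1 : Matrix (Fin m) (Fin m) ℂ) ⊗ₖ C ℓ).mulVec ψ) := by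
          rw [hC ℓ hl1 hl2]
      _ = ((1 : Matrix (Fin m) (Fin m) ℂ) ⊗ₖ (C k * C ℓ)).mulVec ψ := by
          rw [Matrix.mulVec_mulVec, ← Matrix.mul_kronecker_mul, Matrix.one_mul]
  have part1 : ∀ k ℓ, 1 ≤ k → 1 ≤ ℓ → k + ℓ ≤ d - 1 → C k * C ℓ = C (k + ℓ) := by
    intro k ℓ hk hl hkl
    exact cancelB ψ ρB hρB hρBinv _ _
      (((hstep k ℓ hk (by omega) hl (by omega)).symm).trans (hC (k + ℓ) (by omega) hkl))
  have hinv : ∀ k, 1 ≤ k → k ≤ d - 1 → C k * C (d - k) = 1 := by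
    intro k hk1 hk2
    refine cancelB ψ ρB hρB hρBinv _ _ ?_
    rw [← hstep k (d - k) hk1 hk2 (by omega) (by omega)]
    rw [show k + (d - k) = d from by omega, ← star_pow, hAd, star_one,
      Matrix.one_kronecker_one, Matrix.one_mulVec]
  have part2 : ∀ k, 1 ≤ k → k ≤ d - 1 → C k = C 1 ^ k := by
    intro k
    induction k with
    | zero => omega
    | succ k ih =>
      intro _ hk2
      rcases Nat.eq_zero_or_pos k with h0 | h0
      · subst h0; rw [pow_one]
      · rw [← part1 k 1 h0 le_rfl hk2, ih h0 (by omega), pow_succ]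
  have part3 : C 1 ^ d = 1 := by
    have h1 : C (d - 1) * C (d - (d - 1)) = 1 := hinv (d - 1) (by omega) le_rfl
    rw [show d - (d - 1) = 1 from by omega] at h1
    calc C 1 ^ d = C 1 ^ (d - 1) * C 1 ^ 1 := by rw [← pow_add]; congr 1; omega
      _ = C (d - 1) * C 1 := by rw [← part2 (d - 1) (by omega) le_rfl, pow_one]
      _ = 1 := h1
  refine ⟨part1, part2, part3, ?_⟩
  intro hstar k hk1 hk2
  rw [Matrix.mem_unitaryGroup_iff, hstar k hk1 hk2]
  exact hinv k hk1 hk2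
end

section
/- Let B₀ be a unitary on a finite-dimensional Hilbert space H with B₀^d = I, P₁ an orthogonal projection on H, and suppose the projections B₀^ℓ P₁ B₀^{−ℓ} for 0 ≤ ℓ ≤ d−1 are mutually orthogonal and sum to I. Define F = ∑_{ℓ=0}^{d−1} ω^{−ℓ} B₀^ℓ P₁ B₀^{−ℓ}, where ω = exp(2πi/d). Then F is unitary, F^d = I, and F^{−k} B₀ F^k = ω^k B₀ for all integers k. Consequently, all eigenspaces H^{(k)} of B₀ for eigenvalue ω^k satisfy H^{(k+ℓ mod d)} = F^k H^{(ℓ)} and are mutually isomorphic. -/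
open Complex Matrix

/-- For a unitary `B₀` with `B₀^d = I` and an orthogonal projection `P₁` whose conjugates
`B₀^ℓ P₁ B₀^{−ℓ}` are mutually orthogonal and sum to `I`, the operator
`F = ∑_ℓ ω^{−ℓ} B₀^ℓ P₁ B₀^{−ℓ}` is unitary, `F^d = I`, `F^{−k} B₀ F^k = ω^k B₀`,
and the eigenspaces of `B₀` satisfy `H^{(k+ℓ mod d)} = F^k H^{(ℓ)}`.
Here `X^{−k}` is written `(star X)^k` for the unitaries `X = B₀, F`. -/
theorem F_shifts_eigenspaces
    (n : ℕ) (d : ℕ) (hd : 2 ≤ d)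
    (ω : ℂ) (hω : ω = Complex.exp (2 * Real.pi * I / d))
    (B₀ : Matrix (Fin n) (Fin n) ℂ) (hB₀u : B₀ ∈ Matrix.unitaryGroup (Fin n) ℂ)
    (hB₀d : B₀ ^ d = 1)
    (P₁ : Matrix (Fin n) (Fin n) ℂ) (hP₁ : P₁ * P₁ = P₁ ∧ star P₁ = P₁)
    (horth : ∀ ℓ m : ℕ, ℓ < d → m < d → ℓ ≠ m →
      (B₀ ^ ℓ * P₁ * (star B₀) ^ ℓ) * (B₀ ^ m * P₁ * (star B₀) ^ m) = 0)
    (hsum : ∑ ℓ ∈ Finset.range d, B₀ ^ ℓ * P₁ * (star B₀) ^ ℓ = 1)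
    (F : Matrix (Fin n) (Fin n) ℂ)
    (hF : F = ∑ ℓ ∈ Finset.range d, (ω ^ (-(ℓ : ℤ))) • (B₀ ^ ℓ * P₁ * (star B₀) ^ ℓ)) :
    (F * star F = 1 ∧ star F * F = 1) ∧
    F ^ d = 1 ∧
    (∀ k : ℕ, (star F) ^ k * B₀ * F ^ k = (ω ^ k) • B₀) ∧
    (∀ k ℓ : ℕ, {v : Fin n → ℂ | B₀.mulVec v = ω ^ ((k + ℓ) % d) • v} =
      (fun v => (F ^ k).mulVec v) '' {v : Fin n → ℂ | B₀.mulVec v = ω ^ ℓ • v}) := by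
  obtain ⟨hP2, hPstar⟩ := hP₁
  obtain ⟨hB1, hB2⟩ := Unitary.mem_iff.mp hB₀u
  set Q : ℕ → Matrix (Fin n) (Fin n) ℂ := fun ℓ => B₀ ^ ℓ * P₁ * (star B₀) ^ ℓ with hQdef
  have hd0 : (d : ℂ) ≠ 0 := Nat.cast_ne_zero.mpr (by omega)
  have hω0 : ω ≠ 0 := by rw [hω]; exact Complex.exp_ne_zero _
  have hωd : ω ^ d = 1 := by
    rw [hω, ← Complex.exp_nat_mul, mul_comm, div_mul_cancel₀ _ hd0]
    exact Complex.exp_two_pi_mul_I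
  have hmod : ∀ m : ℕ, ω ^ (m % d) = ω ^ m := by
    intro m
    conv_rhs => rw [← Nat.div_add_mod m d]
    rw [pow_add, pow_mul, hωd, one_pow, one_mul]
  have hconjω : (starRingEnd ℂ) ω = ω⁻¹ := by
    rw [hω, ← Complex.exp_conj, ← Complex.exp_neg]
    congr 1
    simp [map_div₀, Complex.conj_I, Complex.conj_ofNat]
    ring
  have hcoef : ∀ ℓ : ℕ, ω ^ (-(ℓ : ℤ)) * ω ^ ℓ = 1 := by
    intro ℓ
    rw [_root_.zpow_neg, zpow_natCast]
    exact inv_mul_cancel₀ (pow_ne_zero _ hω0)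
  have hinv1 : ∀ ℓ : ℕ, (star B₀) ^ ℓ * B₀ ^ ℓ = 1 := by
    intro ℓ
    induction ℓ with
    | zero => simp
    | succ m ih =>
      rw [pow_succ, pow_succ', mul_assoc, ← mul_assoc (star B₀), hB1, one_mul, ih]
  have hinv2 : ∀ ℓ : ℕ, B₀ ^ ℓ * (star B₀) ^ ℓ = 1 := by
    intro ℓ
    induction ℓ with
    | zero => simp
    | succ m ih =>
      rw [pow_succ, pow_succ', mul_assoc, ← mul_assoc B₀, hB2, one_mul, ih]
  have hstarQ : ∀ ℓ, star (Q ℓ) = Q ℓ := by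
    intro ℓ
    simp [hQdef, Matrix.star_mul, star_pow, star_star, hPstar, mul_assoc]
  have hQQ : ∀ ℓ m : ℕ, ℓ < d → m < d → Q ℓ * Q m = if ℓ = m then Q ℓ else 0 := by
    intro ℓ m hℓ hm
    by_cases h : ℓ = m
    · subst h
      rw [if_pos rfl, hQdef]
      show B₀ ^ ℓ * P₁ * (star B₀) ^ ℓ * (B₀ ^ ℓ * P₁ * (star B₀) ^ ℓ)
        = B₀ ^ ℓ * P₁ * (star B₀) ^ ℓ
      calc B₀ ^ ℓ * P₁ * (star B₀) ^ ℓ * (B₀ ^ ℓ * P₁ * (star B₀) ^ ℓ)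
          = B₀ ^ ℓ * P₁ * ((star B₀) ^ ℓ * B₀ ^ ℓ) * (P₁ * (star B₀) ^ ℓ) := by
            simp only [mul_assoc]
        _ = B₀ ^ ℓ * (P₁ * P₁) * (star B₀) ^ ℓ := by
            rw [hinv1, mul_one]; simp only [mul_assoc]
        _ = B₀ ^ ℓ * P₁ * (star B₀) ^ ℓ := by rw [hP2]
    · rw [if_neg h]
      exact horth ℓ m hℓ hm h
  have hsummul : ∀ c e : ℕ → ℂ,
      (∑ ℓ ∈ Finset.range d, c ℓ • Q ℓ) * (∑ m ∈ Finset.range d, e m • Q m)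
      = ∑ ℓ ∈ Finset.range d, (c ℓ * e ℓ) • Q ℓ := by
    intro c e
    rw [Finset.sum_mul_sum]
    refine Finset.sum_congr rfl fun ℓ hℓ => ?_
    rw [Finset.sum_eq_single ℓ]
    · rw [smul_mul_smul_comm, hQQ ℓ ℓ (Finset.mem_range.mp hℓ) (Finset.mem_range.mp hℓ), if_pos rfl]
    · intro m hm hne
      rw [smul_mul_smul_comm, hQQ ℓ m (Finset.mem_range.mp hℓ) (Finset.mem_range.mp hm),
        if_neg (Ne.symm hne), smul_zero]
    · intro h; exact absurd hℓ h
  have hQsum : ∑ ℓ ∈ Finset.range d, Q ℓ = 1 := hsum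
  have hstarF : star F = ∑ ℓ ∈ Finset.range d, (ω ^ ℓ : ℂ) • Q ℓ := by
    rw [hF, star_sum]
    refine Finset.sum_congr rfl fun ℓ _ => ?_
    rw [star_smul, hstarQ]
    congr 1
    show (starRingEnd ℂ) (ω ^ (-(ℓ:ℤ))) = ω ^ ℓ
    rw [map_zpow₀, hconjω, _root_.zpow_neg, _root_.inv_zpow, inv_inv, zpow_natCast]
  have unit1 : F * star F = 1 := by
    rw [hstarF, hF, hsummul, ← hQsum]
    exact Finset.sum_congr rfl fun ℓ _ => by rw [hcoef, one_smul]
  have unit2 : star F * F = 1 := by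
    rw [hstarF, hF, hsummul, ← hQsum]
    refine Finset.sum_congr rfl fun ℓ _ => ?_
    rw [mul_comm, hcoef, one_smul]
  have hFk : ∀ k : ℕ, F ^ k = ∑ ℓ ∈ Finset.range d, ((ω ^ (-(ℓ:ℤ))) ^ k) • Q ℓ := by
    intro k
    induction k with
    | zero =>
      simp only [pow_zero, one_smul]
      exact hQsum.symm
    | succ m ih =>
      rw [pow_succ, ih, hF, hsummul]
      exact Finset.sum_congr rfl fun ℓ _ => by rw [← pow_succ]
  have hFd : F ^ d = 1 := by
    rw [hFk, ← hQsum]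
    refine Finset.sum_congr rfl fun ℓ _ => ?_
    rw [← zpow_natCast (ω ^ (-(ℓ:ℤ))), ← _root_.zpow_mul, mul_comm, _root_.zpow_mul, zpow_natCast, hωd,
      _root_.one_zpow, one_smul]
  -- shift relation
  have hQd0 : Q d = Q 0 := by
    simp [hQdef, hB₀d, ← star_pow, star_one]
  have hshift : ∀ ℓ : ℕ, B₀ * Q ℓ = Q (ℓ + 1) * B₀ := by
    intro ℓ
    show B₀ * (B₀ ^ ℓ * P₁ * (star B₀) ^ ℓ) = B₀ ^ (ℓ+1) * P₁ * (star B₀) ^ (ℓ+1) * B₀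
    rw [pow_succ B₀, pow_succ (star B₀)]
    calc B₀ * (B₀ ^ ℓ * P₁ * (star B₀) ^ ℓ)
        = B₀ * B₀ ^ ℓ * P₁ * (star B₀) ^ ℓ := by simp only [mul_assoc]
      _ = B₀ ^ ℓ * B₀ * P₁ * ((star B₀) ^ ℓ * (star B₀ * B₀)) := by
          rw [hB1, mul_one, ← pow_succ, ← pow_succ']
      _ = B₀ ^ ℓ * B₀ * P₁ * ((star B₀) ^ ℓ * star B₀) * B₀ := by simp only [mul_assoc]
  have hBF : B₀ * F = ω • (F * B₀) := by
    have hFB : F * B₀ = ∑ ℓ ∈ Finset.range d, (ω ^ (-(ℓ:ℤ))) • (Q ℓ * B₀) := by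
      rw [hF, Finset.sum_mul]
      exact Finset.sum_congr rfl fun ℓ _ => (smul_mul_assoc _ _ _)
    have key : ∑ ℓ ∈ Finset.range d, (ω ^ (-(ℓ:ℤ))) • (Q (ℓ+1) * B₀)
        = ω • ∑ ℓ ∈ Finset.range d, (ω ^ (-(ℓ:ℤ))) • (Q ℓ * B₀) := by
      rw [Finset.smul_sum]
      have step : ∀ ℓ : ℕ, (ω ^ (-(ℓ:ℤ))) • (Q (ℓ+1) * B₀)
          = ω • ((ω ^ (-(ℓ+1:ℕ):ℤ)) • (Q (ℓ+1) * B₀)) := by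
        intro ℓ
        rw [smul_smul]
        congr 1
        have he : (-(ℓ:ℤ)) = 1 + (-(ℓ+1:ℕ):ℤ) := by push_cast; ring
        rw [he, zpow_add₀ hω0, _root_.zpow_one]
      calc ∑ ℓ ∈ Finset.range d, (ω ^ (-(ℓ:ℤ))) • (Q (ℓ+1) * B₀)
          = ∑ ℓ ∈ Finset.range d, ω • ((ω ^ (-(ℓ+1:ℕ):ℤ)) • (Q (ℓ+1) * B₀)) :=
            Finset.sum_congr rfl fun ℓ _ => step ℓ
        _ = ∑ ℓ ∈ Finset.range d, ω • ((ω ^ (-(ℓ:ℕ):ℤ)) • (Q ℓ * B₀)) := by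
            have h0 : ω • ((ω ^ (-(d:ℕ):ℤ)) • (Q d * B₀))
                = ω • ((ω ^ (-(0:ℕ):ℤ)) • (Q 0 * B₀)) := by
              rw [hQd0]
              congr 2
              rw [_root_.zpow_neg, zpow_natCast, hωd]
              simp
            have := Finset.sum_range_succ' (fun ℓ => ω • ((ω ^ (-(ℓ:ℕ):ℤ)) • (Q ℓ * B₀))) d
            have h2 := Finset.sum_range_succ (fun ℓ => ω • ((ω ^ (-(ℓ:ℕ):ℤ)) • (Q ℓ * B₀))) d
            -- ∑_{range(d+1)} f = ∑_{range d} f(·+1) + f 0  and  = ∑_{range d} f + f d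
            rw [h2] at this
            -- this : ∑_{range d} f + f d = ∑_{range d} f(·+1) + f 0
            have := this.symm
            rw [h0] at this
            exact add_right_cancel this
    calc B₀ * F = ∑ ℓ ∈ Finset.range d, (ω ^ (-(ℓ:ℤ))) • (B₀ * Q ℓ) := by
          rw [hF, Finset.mul_sum]
          exact Finset.sum_congr rfl fun ℓ _ => (mul_smul_comm _ _ _)
      _ = ∑ ℓ ∈ Finset.range d, (ω ^ (-(ℓ:ℤ))) • (Q (ℓ+1) * B₀) :=
          Finset.sum_congr rfl fun ℓ _ => by rw [hshift]
      _ = ω • (F * B₀) := by rw [key, hFB]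
  have hBFk : ∀ k : ℕ, B₀ * F ^ k = (ω ^ k) • (F ^ k * B₀) := by
    intro k
    induction k with
    | zero => simp
    | succ m ih =>
      rw [pow_succ F, ← mul_assoc, ih, smul_mul_assoc, mul_assoc, hBF, mul_smul_comm,
        smul_smul, pow_succ ω, mul_assoc]
  have hFkinv : ∀ k : ℕ, F ^ k * (star F) ^ k = 1 ∧ (star F) ^ k * F ^ k = 1 := by
    intro k
    induction k with
    | zero => simp
    | succ m ih =>
      constructor
      · rw [pow_succ' F, pow_succ (star F), mul_assoc, ← mul_assoc (F ^ m), ih.1, one_mul, unit1]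
      · rw [pow_succ' (star F), pow_succ F, mul_assoc, ← mul_assoc ((star F) ^ m), ih.2,
          one_mul, unit2]
  have hconj1 : star F * B₀ * F = ω • B₀ := by
    rw [mul_assoc, hBF, mul_smul_comm, ← mul_assoc, unit2, one_mul]
  have hconjk : ∀ k : ℕ, (star F) ^ k * B₀ * F ^ k = (ω ^ k) • B₀ := by
    intro k
    induction k with
    | zero => simp
    | succ m ih =>
      rw [pow_succ (star F), pow_succ' F]
      calc (star F) ^ m * star F * B₀ * (F * F ^ m)
          = (star F) ^ m * (star F * B₀ * F) * F ^ m := by simp only [mul_assoc]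
        _ = (star F) ^ m * (ω • B₀) * F ^ m := by rw [hconj1]
        _ = ω • ((star F) ^ m * B₀ * F ^ m) := by
            rw [mul_smul_comm, smul_mul_assoc]
        _ = ω • ((ω ^ m) • B₀) := by rw [ih]
        _ = (ω ^ (m+1)) • B₀ := by rw [smul_smul, ← pow_succ']
  have hBstarFk : ∀ k : ℕ, B₀ * (star F) ^ k = ((ω ^ k)⁻¹) • ((star F) ^ k * B₀) := by
    intro k
    have h1 : (star F) ^ k * B₀ = (ω ^ k) • (B₀ * (star F) ^ k) := by
      calc (star F) ^ k * B₀
          = (star F) ^ k * B₀ * (F ^ k * (star F) ^ k) := by rw [(hFkinv k).1, mul_one]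
        _ = ((star F) ^ k * B₀ * F ^ k) * (star F) ^ k := by simp only [mul_assoc]
        _ = ((ω ^ k) • B₀) * (star F) ^ k := by rw [hconjk]
        _ = (ω ^ k) • (B₀ * (star F) ^ k) := smul_mul_assoc _ _ _
    rw [h1, smul_smul, inv_mul_cancel₀ (pow_ne_zero _ hω0), one_smul]
  refine ⟨⟨unit1, unit2⟩, hFd, hconjk, ?_⟩
  intro k ℓ
  ext w
  simp only [Set.mem_setOf_eq, Set.mem_image]
  constructor
  · intro hw
    refine ⟨((star F) ^ k).mulVec w, ?_, ?_⟩
    · show B₀.mulVec (((star F) ^ k).mulVec w) = ω ^ ℓ • ((star F) ^ k).mulVec w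
      rw [Matrix.mulVec_mulVec, hBstarFk, Matrix.smul_mulVec,
        ← Matrix.mulVec_mulVec, hw, Matrix.mulVec_smul, smul_smul]
      congr 1
      rw [hmod, pow_add]
      field_simp
    · rw [Matrix.mulVec_mulVec, (hFkinv k).1, Matrix.one_mulVec]
  · rintro ⟨v, hv, rfl⟩
    show B₀.mulVec ((F ^ k).mulVec v) = ω ^ ((k + ℓ) % d) • (F ^ k).mulVec v
    rw [Matrix.mulVec_mulVec, hBFk, Matrix.smul_mulVec, ← Matrix.mulVec_mulVec,
      hv, Matrix.mulVec_smul, smul_smul, hmod, pow_add]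
end

section
/- Let α = tan θ with θ ∈ (0, π/4], μ ∈ (0, π/4] with tan μ = sin 2θ, |Φ^{(α)}⟩ = cos θ|00⟩ + sin θ|11⟩, A₀ = σ_z, A₁ = σ_x, B₀ = cos μ·σ_z + sin μ·σ_x, B₁ = cos μ·σ_z − sin μ·σ_x, and β ∈ [0,2) determined by sin 2θ = √((4−β²)/(4+β²)). Then ⟨Φ^{(α)}| (β A₀⊗I + A₀⊗B₀ + A₀⊗B₁ + A₁⊗B₀ − A₁⊗B₁) |Φ^{(α)}⟩ = √(8 + 2β²). -/
open Complex Matrix Kronecker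

lemma sq_eq_of_nonneg' {a b : ℝ} (ha : 0 ≤ a) (hb : 0 ≤ b) (h : a^2 = b^2) : a = b := by
  calc a = Real.sqrt (a^2) := (Real.sqrt_sq ha).symm
  _ = Real.sqrt (b^2) := by rw [h]
  _ = b := Real.sqrt_sq hb

lemma tilted_chsh_key (θ μ β : ℝ)
    (hθ : θ ∈ Set.Ioc 0 (Real.pi / 4)) (hμ : μ ∈ Set.Ioc 0 (Real.pi / 4))
    (hβ : β ∈ Set.Ico 0 2)
    (htanμ : Real.tan μ = Real.sin (2 * θ))
    (hsin : Real.sin (2 * θ) = Real.sqrt ((4 - β ^ 2) / (4 + β ^ 2))) :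
    β * (Real.cos θ ^ 2 - Real.sin θ ^ 2) + 2 * Real.cos μ
      + 4 * Real.sin μ * Real.sin θ * Real.cos θ = Real.sqrt (8 + 2 * β ^ 2) := by
  obtain ⟨hθ0, hθ1⟩ := hθ
  obtain ⟨hμ0, hμ1⟩ := hμ
  obtain ⟨hβ0, hβ2⟩ := hβ
  have hpi := Real.pi_pos
  have hK : (0:ℝ) < 4 + β ^ 2 := by positivity
  have hnum : (0:ℝ) ≤ 4 - β ^ 2 := by nlinarith
  set s2 := Real.sin (2 * θ) with hs2def
  set c2 := Real.cos (2 * θ) with hc2def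
  set r := Real.sqrt (4 + β ^ 2) with hrdef
  have hr2 : r ^ 2 = 4 + β ^ 2 := Real.sq_sqrt hK.le
  have hrpos : 0 < r := Real.sqrt_pos.mpr hK
  have h2 : (Real.sqrt 2) ^ 2 = 2 := Real.sq_sqrt (by norm_num)
  have h2pos : (0:ℝ) < Real.sqrt 2 := Real.sqrt_pos.mpr (by norm_num)
  have hs2sq : s2 ^ 2 = (4 - β ^ 2) / (4 + β ^ 2) := by
    rw [hsin]; exact Real.sq_sqrt (by positivity)
  have hs2r : s2 ^ 2 * r ^ 2 = 4 - β ^ 2 := by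
    rw [hs2sq, hr2]; field_simp
  have hcμpos : 0 < Real.cos μ := Real.cos_pos_of_mem_Ioo
    ⟨by linarith, by linarith [Real.pi_gt_three]⟩
  have hsμ : Real.sin μ = s2 * Real.cos μ := by
    have := Real.tan_eq_sin_div_cos μ
    rw [htanμ] at this
    field_simp at this
    linarith [this]
  have hpyμ : Real.sin μ ^ 2 + Real.cos μ ^ 2 = 1 := Real.sin_sq_add_cos_sq μ
  have hcμsq : Real.cos μ ^ 2 = (4 + β ^ 2) / 8 := by
    rw [hsμ] at hpyμ
    have h1s : 1 + s2 ^ 2 = 8 / (4 + β ^ 2) := by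
      rw [hs2sq]; field_simp; ring
    have : Real.cos μ ^ 2 * (1 + s2 ^ 2) = 1 := by nlinarith [hpyμ]
    rw [h1s] at this
    field_simp at this ⊢
    linarith
  have hcμr : Real.cos μ * (2 * Real.sqrt 2) = r := by
    apply sq_eq_of_nonneg' (by positivity) hrpos.le
    rw [mul_pow, hcμsq, hr2, mul_pow, h2]
    ring
  have hc2nonneg : 0 ≤ c2 := Real.cos_nonneg_of_mem_Icc
    ⟨by linarith, by linarith⟩
  have hpy2 : s2 ^ 2 + c2 ^ 2 = 1 := Real.sin_sq_add_cos_sq (2 * θ)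
  have hs2K : s2 ^ 2 * (4 + β ^ 2) = 4 - β ^ 2 := by
    rw [hs2sq]; field_simp
  have hc2r : c2 * r = Real.sqrt 2 * β := by
    apply sq_eq_of_nonneg' (by positivity) (by positivity)
    rw [mul_pow, mul_pow, hr2, h2]
    linear_combination (4 + β ^ 2) * hpy2 - hs2K
  have hcosd : Real.cos θ ^ 2 - Real.sin θ ^ 2 = c2 := by
    have h := Real.sin_sq_add_cos_sq θ
    rw [hc2def, Real.cos_two_mul]; linarith
  have hsind : 2 * Real.sin θ * Real.cos θ = s2 := by
    rw [hs2def, Real.sin_two_mul]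
  have hrhs : Real.sqrt (8 + 2 * β ^ 2) = Real.sqrt 2 * r := by
    rw [hrdef, show (8 + 2 * β ^ 2 : ℝ) = 2 * (4 + β ^ 2) by ring,
      Real.sqrt_mul (by norm_num : (0:ℝ) ≤ 2)]
  rw [hrhs]
  have hgoal : (β * (Real.cos θ ^ 2 - Real.sin θ ^ 2) + 2 * Real.cos μ
      + 4 * Real.sin μ * Real.sin θ * Real.cos θ) * (2 * Real.sqrt 2 * r)
      = (Real.sqrt 2 * r) * (2 * Real.sqrt 2 * r) := by
    rw [hcosd, hsμ]
    have h4 : 4 * (s2 * Real.cos μ) * Real.sin θ * Real.cos θ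
        = 2 * s2 ^ 2 * Real.cos μ := by
      rw [← hsind]; ring
    rw [h4]
    linear_combination (2*r) * hcμr + (2*s2^2*r) * hcμr + (2*Real.sqrt 2*β) * hc2r
      + (2*β^2) * h2 - (2*r^2) * h2 - 2 * hr2 + 2 * hs2r
  have hne : (2 * Real.sqrt 2 * r) ≠ 0 := by positivity
  exact mul_right_cancel₀ hne hgoal

/-- The ideal tilted-CHSH strategy achieves the value `√(8 + 2β²)`. -/
theorem tilted_chsh_optimal_value
    (θ μ α β : ℝ)
    (hθ : θ ∈ Set.Ioc 0 (Real.pi / 4)) (hμ : μ ∈ Set.Ioc 0 (Real.pi / 4))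
    (hα : α = Real.tan θ) (hβ : β ∈ Set.Ico 0 2)
    (htanμ : Real.tan μ = Real.sin (2 * θ))
    (hsin : Real.sin (2 * θ) = Real.sqrt ((4 - β ^ 2) / (4 + β ^ 2)))
    (σz σx : Matrix (Fin 2) (Fin 2) ℂ)
    (hσz : σz = !![1, 0; 0, -1]) (hσx : σx = !![0, 1; 1, 0])
    (A₀ A₁ B₀ B₁ : Matrix (Fin 2) (Fin 2) ℂ)
    (hA₀ : A₀ = σz) (hA₁ : A₁ = σx)
    (hB₀ : B₀ = (Real.cos μ : ℂ) • σz + (Real.sin μ : ℂ) • σx)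
    (hB₁ : B₁ = (Real.cos μ : ℂ) • σz - (Real.sin μ : ℂ) • σx)
    (Φ : Fin 2 × Fin 2 → ℂ)
    (hΦ : Φ = fun p => if p = (0, 0) then (Real.cos θ : ℂ)
      else if p = (1, 1) then (Real.sin θ : ℂ) else 0)
    (T : Matrix (Fin 2 × Fin 2) (Fin 2 × Fin 2) ℂ)
    (hT : T = (β : ℂ) • (A₀ ⊗ₖ (1 : Matrix (Fin 2) (Fin 2) ℂ)) +
      A₀ ⊗ₖ B₀ + A₀ ⊗ₖ B₁ + A₁ ⊗ₖ B₀ - A₁ ⊗ₖ B₁) :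
    ∑ p, (starRingEnd ℂ) (Φ p) * T.mulVec Φ p = (Real.sqrt (8 + 2 * β ^ 2) : ℂ) := by
  have key := tilted_chsh_key θ μ β hθ hμ hβ htanμ hsin
  subst hσz hσx hA₀ hA₁ hB₀ hB₁ hΦ hT
  simp [Fintype.sum_prod_type, Fin.sum_univ_two, Matrix.mulVec, dotProduct,
    Matrix.kroneckerMap_apply, Matrix.one_apply, Prod.ext_iff, Complex.conj_ofReal,
    -Complex.ofReal_cos, -Complex.ofReal_sin]
  rw [← key]
  push_cast
  linear_combination 2 * Complex.cos (μ:ℂ) * Complex.sin_sq_add_cos_sq (θ:ℂ)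
end
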